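/- Define generalized Bernoulli numbers b_i^{(k)} := i!·[t^i] (t/(e^t−1))^k. Then for all n ≥ k ≥ 0, the signed Stirling numbers of the first kind satisfy s(n,k) = C(n,k) · Σ_{i=0}^{n−k} b_i^{(k)} · s(n−k, i). -/

import Mathlib

/-- Signed Stirling numbers of the first kind, via the recurrence
`s(n+1,k) = s(n,k-1) - n·s(n,k)`. -/
def stirling1 : ℕ → ℕ → ℤ
  | 0, 0 => 1
  | 0, _ + 1 => 0
  | n + 1, 0 => -(n : ℤ) * stirling1 n 0
  | n + 1, k + 1 => stirling1 n k - (n : ℤ) * stirling1 n (k + 1)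

/-- `(e^t-1)/t = Σ_{m≥0} t^m/(m+1)!` as a formal power series over `ℚ`. -/
noncomputable def expSubOneDivT : PowerSeries ℚ :=
  PowerSeries.mk fun m => (1 : ℚ) / (m + 1).factorial

/-- The generalized Bernoulli numbers `b_i^{(k)} = i!·[t^i](t/(e^t-1))^k`. -/
noncomputable def bernoulliGen (i k : ℕ) : ℚ :=
  (i.factorial : ℚ) * PowerSeries.coeff i (expSubOneDivT⁻¹ ^ k)


/-! Substitute `t = log (1 + x)`: since `exp (log (1 + x)) = 1 + x`, this turns `t / (e^t - 1)`
into `log (1 + x) / x`. On the other hand `log (1 + x)^k / k! = ∑ₙ s(n,k) xⁿ / n!`, as both sides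
satisfy the recurrence coming from `(1 + x) · d/dx log (1 + x) = 1`. Comparing the coefficients
of `x^(n-k)` in `((t / (e^t - 1))^k)(log (1 + x)) = x^(-k) log (1 + x)^k` gives the identity. -/

open PowerSeries Finset Nat

lemma stirling1_succ_zero (n : ℕ) : stirling1 (n + 1) 0 = 0 := by
  induction n with
  | zero => simp [stirling1]
  | succ n ih => rw [stirling1, ih, mul_zero]

namespace PowerSeries

theorem coeff_subst_eq_sum_range {R : Type*} [CommRing R] {a : R⟦X⟧} (ha : constantCoeff a = 0)
    (f : R⟦X⟧) (n : ℕ) :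
    coeff n (f.subst a) = ∑ i ∈ range (n + 1), coeff i f * coeff n (a ^ i) := by
  rw [coeff_subst' (HasSubst.of_constantCoeff_zero' ha)]
  refine finsum_eq_sum_of_support_subset _ fun i hi => ?_
  obtain ⟨b, rfl⟩ := X_dvd_iff.mpr ha
  by_contra hin
  simp only [mem_coe, mem_range, not_lt] at hin
  simp [mul_pow, coeff_X_pow_mul', show ¬ i ≤ n by omega] at hi

theorem derivative_log : d⁄dX ℚ (log ℚ) = (1 + X)⁻¹ := by
  rw [PowerSeries.eq_inv_iff_mul_eq_one (by simp), deriv_log]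
  ext n
  rcases n with _ | n <;> simp [mul_add, coeff_succ_mul_X, pow_succ]

/-- `exp (log (1 + X)) · (1 + X)⁻¹` has derivative zero. -/
theorem subst_log_exp : (exp ℚ).subst (log ℚ) = 1 + X := by
  have hF : d⁄dX ℚ ((exp ℚ).subst (log ℚ)) = (exp ℚ).subst (log ℚ) * (1 + X)⁻¹ := by
    rw [derivative_subst HasSubst.log, derivative_exp, derivative_log]
  have hF0 : constantCoeff ((exp ℚ).subst (log ℚ)) = 1 := by
    rw [← coeff_zero_eq_constantCoeff_apply, coeff_subst_eq_sum_range constantCoeff_log]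
    simp
  have h : (exp ℚ).subst (log ℚ) * (1 + X)⁻¹ = 1 := by
    refine derivative.ext ?_ (by simp [hF0])
    rw [Derivation.leibniz, derivative_inv', hF]
    simp only [map_add, Derivation.map_one_eq_zero, derivative_X, zero_add, mul_one]
    ring
  calc (exp ℚ).subst (log ℚ) = (exp ℚ).subst (log ℚ) * (1 + X)⁻¹ * (1 + X) := by
        rw [mul_assoc, PowerSeries.inv_mul_cancel _ (by simp), mul_one]
    _ = 1 + X := by rw [h, one_mul]

theorem coeff_X_mul_derivative {R : Type*} [CommSemiring R] (f : R⟦X⟧) (n : ℕ) :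
    coeff n (X * d⁄dX R f) = n * coeff n f := by
  rcases n with _ | n
  · simp
  · rw [coeff_succ_X_mul, coeff_derivative, mul_comm]
    push_cast
    rfl

theorem coeff_log_pow_recurrence (n k : ℕ) :
    (n + 1 : ℚ) * coeff (n + 1) (log ℚ ^ (k + 1)) + n * coeff n (log ℚ ^ (k + 1)) =
      (k + 1) * coeff n (log ℚ ^ k) := by
  have h : (1 + X) * d⁄dX ℚ (log ℚ ^ (k + 1)) = (k + 1 : ℚ) • log ℚ ^ k := by
    rw [derivative_pow, derivative_log, Nat.add_sub_cancel, mul_comm, mul_assoc,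
      PowerSeries.inv_mul_cancel _ (by simp), mul_one, smul_eq_C_mul]
    simp
  have := congrArg (coeff n) h
  rw [add_mul, one_mul, map_add, coeff_derivative, coeff_X_mul_derivative, map_smul,
    smul_eq_mul] at this
  linear_combination this

theorem coeff_log_pow (n k : ℕ) :
    coeff n (log ℚ ^ k) = k ! * stirling1 n k / n ! := by
  induction n generalizing k with
  | zero => cases k <;> simp [stirling1]
  | succ n ih =>
    cases k with
    | zero => simp [stirling1_succ_zero]
    | succ k =>
      have h := coeff_log_pow_recurrence n k
      rw [ih, ih] at h
      rw [stirling1]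
      field_simp at h ⊢
      push_cast [factorial_succ] at h ⊢
      linear_combination h

end PowerSeries

theorem X_mul_expSubOneDivT : X * expSubOneDivT = exp ℚ - 1 := by
  ext n
  rcases n with _ | n <;> simp [expSubOneDivT, coeff_succ_X_mul]

theorem constantCoeff_expSubOneDivT : constantCoeff expSubOneDivT = 1 := by
  simp [expSubOneDivT, ← coeff_zero_eq_constantCoeff_apply]

theorem X_pow_mul_subst_log_inv_expSubOneDivT_pow (k : ℕ) :
    X ^ k * (expSubOneDivT⁻¹ ^ k).subst (log ℚ) = log ℚ ^ k := by
  have hsubst_one : (1 : ℚ⟦X⟧).subst (log ℚ) = 1 := by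
    rw [← coe_substAlgHom HasSubst.log, map_one]
  have hlog : log ℚ * expSubOneDivT.subst (log ℚ) = X := by
    have h := congrArg (subst (log ℚ)) X_mul_expSubOneDivT
    rwa [subst_mul HasSubst.log, subst_X HasSubst.log, subst_sub HasSubst.log, subst_log_exp,
      hsubst_one, add_sub_cancel_left] at h
  have hinv : expSubOneDivT.subst (log ℚ) * expSubOneDivT⁻¹.subst (log ℚ) = 1 := by
    rw [← subst_mul HasSubst.log,
      PowerSeries.mul_inv_cancel _ (by simp [constantCoeff_expSubOneDivT]), hsubst_one]
  rw [subst_pow HasSubst.log, ← mul_pow, ← hlog, mul_assoc, hinv, mul_one]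

/-- `s(n,k) = C(n,k)·Σ_{i=0}^{n-k} b_i^{(k)}·s(n-k,i)` for `n ≥ k ≥ 0`. -/
theorem stirling1_generalizedBernoulli (n k : ℕ) (hkn : k ≤ n) :
    (stirling1 n k : ℚ) =
      (n.choose k : ℚ) * ∑ i ∈ Finset.range (n - k + 1),
        bernoulliGen i k * (stirling1 (n - k) i : ℚ) := by
  obtain ⟨m, rfl⟩ := Nat.exists_eq_add_of_le' hkn
  have key : (k ! * stirling1 (m + k) k / (m + k)! : ℚ) =
      (∑ i ∈ range (m + 1), bernoulliGen i k * stirling1 m i) / m ! := by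
    rw [← coeff_log_pow, ← X_pow_mul_subst_log_inv_expSubOneDivT_pow, coeff_X_pow_mul,
      coeff_subst_eq_sum_range constantCoeff_log, sum_div]
    refine sum_congr rfl fun i _ => ?_
    rw [coeff_log_pow, bernoulliGen]
    field_simp
  rw [Nat.add_sub_cancel, Nat.cast_choose ℚ hkn, Nat.add_sub_cancel]
  field_simp at key ⊢
  linear_combination key
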